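/- arXiv:1302.3156 — 3 statements merged into one kernel-verified Lean document; each statement's English description precedes it below -/
import Mathlib

section
/- Let n ≥ 2, let A = (a_{ij}) be a symmetric positive-definite real n×n matrix, let b = (b_i) be a nonzero covector, and let c ∈ ℝ. Then there exists an index k such that there do NOT exist a linear form f_k on ℝⁿ and a constant g_k ∈ ℝ with α(y)²·b_k − β(y)·ȳ_k = (f_k(y) + g_k·α(y))·(β(y) + c·α(y)) for all y ∈ ℝⁿ. (Equivalently: for some k, the expression α·b_k − s·ȳ_k with s = β/α is not divisible by s + c.) -/
/-!
Suppose every `k` admits a factorization. Replacing `y` by `-y` fixes `α` and flips the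
linear forms, so the factorization splits into a part odd in `y`, `α (c f_k + g_k β) = 0`, and
an even part, `α² (b_k - c g_k) = β (f_k + ȳ_k)`. Since `n ≥ 2` there is `y₀ ≠ 0` with
`β(y₀) = 0`; there `α(y₀) > 0`, so `b_k = c g_k` for all `k`, whence `c ≠ 0` (as `b ≠ 0`) and
`β (f_k + ȳ_k) ≡ 0`, i.e. `f_k = -ȳ_k`. The odd part at `y₀` gives `f_k(y₀) = 0`, so
`A y₀ = 0`, contradicting positive definiteness.
-/

open scoped BigOperators

noncomputable section

/-- `α(y) = √(a_{ij} yⁱ yʲ)`. -/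
def alphaOf {n : ℕ} (A : Matrix (Fin n) (Fin n) ℝ) (y : Fin n → ℝ) : ℝ :=
  Real.sqrt (∑ i, ∑ j, A i j * y i * y j)

/-- `β(y) = b_i yⁱ`. -/
def betaOf {n : ℕ} (b : Fin n → ℝ) (y : Fin n → ℝ) : ℝ := ∑ i, b i * y i

/-- `ȳ_k = a_{kj} yʲ`. -/
def lowered {n : ℕ} (A : Matrix (Fin n) (Fin n) ℝ) (k : Fin n) (y : Fin n → ℝ) : ℝ :=
  ∑ j, A k j * y j

open Matrix

lemma AddMonoidHom.eq_zero_of_forall_mul_eq_zero {M R : Type*} [AddZeroClass M]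
    [NonUnitalNonAssocSemiring R] [NoZeroDivisors R] {ℓ m : M →+ R} (hℓ : ℓ ≠ 0)
    (h : ∀ y, ℓ y * m y = 0) : m = 0 := by
  obtain ⟨y₁, hy₁⟩ := DFunLike.ne_iff.mp hℓ
  have hm₁ : m y₁ = 0 := (mul_eq_zero.mp (h y₁)).resolve_left hy₁
  ext y
  by_cases hy : ℓ y = 0
  · have hsum : ℓ (y + y₁) ≠ 0 := by rwa [map_add, hy, zero_add]
    have := (mul_eq_zero.mp (h (y + y₁))).resolve_left hsum
    rwa [map_add, hm₁, add_zero] at this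
  · exact (mul_eq_zero.mp (h y)).resolve_left hy

lemma Module.Dual.exists_ne_zero_apply_eq_zero {K V : Type*} [Field K] [AddCommGroup V]
    [Module K V] [FiniteDimensional K V] (hV : 1 < Module.finrank K V)
    (ℓ : Module.Dual K V) : ∃ y ≠ 0, ℓ y = 0 := by
  obtain ⟨y, hy, hy0⟩ :=
    (Submodule.ne_bot_iff _).mp (ℓ.ker_ne_bot_of_finrank_lt (by rwa [Module.finrank_self]))
  exact ⟨y, hy0, hy⟩

section alphaOf

variable {n : ℕ} {A : Matrix (Fin n) (Fin n) ℝ}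

lemma alphaOf_eq_sqrt_dotProduct (A : Matrix (Fin n) (Fin n) ℝ) (y : Fin n → ℝ) :
    alphaOf A y = √(y ⬝ᵥ A *ᵥ y) := by
  simp only [alphaOf, dotProduct, mulVec, Finset.mul_sum, mul_left_comm, mul_comm]

lemma alphaOf_neg (A : Matrix (Fin n) (Fin n) ℝ) (y : Fin n → ℝ) :
    alphaOf A (-y) = alphaOf A y := by
  simp only [alphaOf_eq_sqrt_dotProduct, mulVec_neg, dotProduct_neg, neg_dotProduct, neg_neg]

lemma alphaOf_sq (hA : A.PosDef) (y : Fin n → ℝ) : alphaOf A y ^ 2 = y ⬝ᵥ A *ᵥ y := by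
  rw [alphaOf_eq_sqrt_dotProduct, Real.sq_sqrt]
  simpa using hA.posSemidef.dotProduct_mulVec_nonneg y

lemma alphaOf_pos (hA : A.PosDef) {y : Fin n → ℝ} (hy : y ≠ 0) : 0 < alphaOf A y := by
  rw [alphaOf_eq_sqrt_dotProduct, Real.sqrt_pos]
  simpa using hA.dotProduct_mulVec_pos hy

end alphaOf

section divisibility

variable {n : ℕ} {A : Matrix (Fin n) (Fin n) ℝ} {b f ℓ : Fin n → ℝ} {bₖ c g : ℝ}

/-- `ℓ` plays the role of `ȳ_k`, i.e. of the row `A k`. -/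
abbrev IsFactorization (A : Matrix (Fin n) (Fin n) ℝ) (b f ℓ : Fin n → ℝ) (bₖ c g : ℝ) : Prop :=
  ∀ y, alphaOf A y ^ 2 * bₖ - b ⬝ᵥ y * ℓ ⬝ᵥ y =
    (f ⬝ᵥ y + g * alphaOf A y) * (b ⬝ᵥ y + c * alphaOf A y)

lemma IsFactorization.odd_part (hA : A.PosDef) (h : IsFactorization A b f ℓ bₖ c g)
    (y : Fin n → ℝ) : c * f ⬝ᵥ y + g * b ⬝ᵥ y = 0 := by
  rcases eq_or_ne y 0 with rfl | hy
  · simp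
  have hodd : 2 * alphaOf A y * (c * f ⬝ᵥ y + g * b ⬝ᵥ y) = 0 := by
    have hneg := h (-y)
    rw [alphaOf_neg, dotProduct_neg, dotProduct_neg, dotProduct_neg] at hneg
    linear_combination hneg - h y
  exact (mul_eq_zero.mp hodd).resolve_left (by positivity [alphaOf_pos hA hy])

lemma IsFactorization.even_part (hA : A.PosDef) (h : IsFactorization A b f ℓ bₖ c g)
    (y : Fin n → ℝ) : (y ⬝ᵥ A *ᵥ y) * (bₖ - c * g) = b ⬝ᵥ y * (f + ℓ) ⬝ᵥ y := by
  rw [← alphaOf_sq hA, add_dotProduct]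
  linear_combination h y + alphaOf A y * h.odd_part hA y

lemma IsFactorization.eq_mul (hA : A.PosDef) (h : IsFactorization A b f ℓ bₖ c g)
    {y₀ : Fin n → ℝ} (hy₀ : y₀ ≠ 0) (hβ : b ⬝ᵥ y₀ = 0) : bₖ = c * g := by
  have hq : y₀ ⬝ᵥ A *ᵥ y₀ ≠ 0 := by simpa using (hA.dotProduct_mulVec_pos hy₀).ne'
  have := h.even_part hA y₀
  rw [hβ, zero_mul] at this
  linarith [(mul_eq_zero.mp this).resolve_left hq]

lemma IsFactorization.add_eq_zero (hA : A.PosDef) (h : IsFactorization A b f ℓ bₖ c g)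
    (hb : b ≠ 0) (hbₖ : bₖ = c * g) : f + ℓ = 0 := by
  have hβ : (dotProductEquiv ℝ (Fin n) b).toAddMonoidHom ≠ 0 := fun h0 =>
    hb (dotProduct_eq_zero b fun w => DFunLike.congr_fun h0 w)
  have := AddMonoidHom.eq_zero_of_forall_mul_eq_zero hβ
    (m := (dotProductEquiv ℝ (Fin n) (f + ℓ)).toAddMonoidHom)
    fun y => by simpa [hbₖ] using (h.even_part hA y).symm
  exact dotProduct_eq_zero _ fun y => DFunLike.congr_fun this y

end divisibility

theorem stmt_3_general {n : ℕ} (hn : 2 ≤ n) (A : Matrix (Fin n) (Fin n) ℝ)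
    (hpos : A.PosDef) (b : Fin n → ℝ) (hb : b ≠ 0) (c : ℝ) :
    ∃ k : Fin n, ¬ ∃ (f : Fin n → ℝ) (g : ℝ), ∀ y : Fin n → ℝ,
      (alphaOf A y)^2 * b k - betaOf b y * lowered A k y =
        ((∑ i, f i * y i) + g * alphaOf A y) * (betaOf b y + c * alphaOf A y) := by
  by_contra! hdiv
  choose f g hfg using hdiv
  have hfact k : IsFactorization A b (f k) (A k) (b k) c (g k) := hfg k
  obtain ⟨y₀, hy₀, hβ : b ⬝ᵥ y₀ = 0⟩ :=
    (dotProductEquiv ℝ (Fin n) b).exists_ne_zero_apply_eq_zero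
      (by rw [Module.finrank_fin_fun]; omega)
  have hbₖ k : b k = c * g k := (hfact k).eq_mul hpos hy₀ hβ
  have hc : c ≠ 0 := by
    rintro rfl
    exact hb (funext fun k => by simpa using hbₖ k)
  have hAy₀ : A *ᵥ y₀ = 0 := funext fun k => by
    have hf : f k ⬝ᵥ y₀ = 0 := by
      simpa [hβ, hc] using (hfact k).odd_part hpos y₀
    have hsum := congrArg (· ⬝ᵥ y₀) ((hfact k).add_eq_zero hpos hb (hbₖ k))
    rwa [add_dotProduct, hf, zero_add, zero_dotProduct] at hsum
  simpa [hAy₀] using hpos.dotProduct_mulVec_pos hy₀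

/-- Lemma 3.1: for a positive-definite symmetric `A`, a nonzero covector `b` and any
scalar `c`, for some index `k` the expression `α b_k − s ȳ_k` (with `s = β/α`) is not
divisible by `s + c`, i.e. there is no identity
`α² b_k − β ȳ_k = (f_k(y) + g_k α)(β + c α)`. -/
theorem stmt_3 {n : ℕ} (hn : 2 ≤ n) (A : Matrix (Fin n) (Fin n) ℝ)
    (hsym : A.IsSymm) (hpos : A.PosDef) (b : Fin n → ℝ) (hb : b ≠ 0) (c : ℝ) :
    ∃ k : Fin n, ¬ ∃ (f : Fin n → ℝ) (g : ℝ), ∀ y : Fin n → ℝ,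
      (alphaOf A y)^2 * b k - betaOf b y * lowered A k y =
        ((∑ i, f i * y i) + g * alphaOf A y) * (betaOf b y + c * alphaOf A y) :=
  stmt_3_general hn A hpos b hb c
end
end

section
/- Let μ ∈ ℝ and let Ω be a connected open subset of {x ∈ ℝⁿ : 1+μ|x|² > 0}, n ≥ 2, equipped with the metric h_{ij}(x) = ((1+μ|x|²)δ_{ij} − μx_ix_j)/(1+μ|x|²)² of constant sectional curvature μ. Let w_i be a smooth 1-form on Ω which is closed and conformal with respect to h, i.e., ∂w_i/∂xʲ − Γᵏ_{ij}w_k = φ(x)·h_{ij} for all i,j and some smooth function φ, where Γᵏ_{ij} are the Christoffel symbols of h. Then there exist a constant k ∈ ℝ and a constant vector a = (aⁱ) ∈ ℝⁿ such that w_i(x) = [(k − μ⟨a,x⟩)x_i + (1+μ|x|²)a_i]/(1+μ|x|²)^{3/2}, equivalently wⁱ := h^{ij}w_j = √(1+μ|x|²)·(kxⁱ + aⁱ). -/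
open scoped BigOperators

noncomputable section

abbrev Vec (n : ℕ) := Fin n → ℝ

/-- Partial derivative of a function on `ℝⁿ` in the `k`-th coordinate direction. -/
def pd {n : ℕ} (f : Vec n → ℝ) (k : Fin n) (x : Vec n) : ℝ :=
  fderiv ℝ f x (Pi.single k 1)

/-- Christoffel symbols `Γᵏ_{ij} = ½ g^{kl}(∂g_{li}/∂xʲ + ∂g_{lj}/∂xⁱ − ∂g_{ij}/∂xˡ)`. -/
def christoffel {n : ℕ} (g : Vec n → Matrix (Fin n) (Fin n) ℝ) (k i j : Fin n)
    (x : Vec n) : ℝ :=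
  (1/2) * ∑ l, (g x)⁻¹ k l *
    (pd (fun x => g x l i) j x + pd (fun x => g x l j) i x - pd (fun x => g x i j) l x)

/-- The standard metric of constant sectional curvature `μ`:
`h_{ij}(x) = ((1+μ|x|²)δ_{ij} − μx_ix_j)/(1+μ|x|²)²`. -/
def hMat {n : ℕ} (μ : ℝ) (x : Vec n) : Matrix (Fin n) (Fin n) ℝ :=
  Matrix.of fun i j =>
    ((1 + μ * ∑ l, (x l)^2) * (if i = j then (1:ℝ) else 0) - μ * x i * x j)
      / (1 + μ * ∑ l, (x l)^2)^2

namespace Stmt8Aux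

variable {n : ℕ} {μ : ℝ} {f g : Vec n → ℝ} {x : Vec n} {k i j a b c : Fin n}

/-! ### A small calculus of partial derivatives -/

lemma pd_const (c : ℝ) : pd (fun _ => c) k x = 0 := by simp [pd]

lemma pd_coord : pd (fun x : Vec n => x i) k x = if k = i then 1 else 0 := by
  have : fderiv ℝ (fun x : Vec n => x i) x = ContinuousLinearMap.proj i :=
    (ContinuousLinearMap.proj i : Vec n →L[ℝ] ℝ).fderiv
  simp [pd, this, Pi.single_apply, eq_comm]

lemma pd_add (hf : DifferentiableAt ℝ f x) (hg : DifferentiableAt ℝ g x) :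
    pd (fun y => f y + g y) k x = pd f k x + pd g k x := by
  simp [pd, fderiv_fun_add hf hg]

lemma pd_sub (hf : DifferentiableAt ℝ f x) (hg : DifferentiableAt ℝ g x) :
    pd (fun y => f y - g y) k x = pd f k x - pd g k x := by
  simp [pd, fderiv_fun_sub hf hg]

lemma pd_mul (hf : DifferentiableAt ℝ f x) (hg : DifferentiableAt ℝ g x) :
    pd (fun y => f y * g y) k x = pd f k x * g x + f x * pd g k x := by
  simp [pd, fderiv_fun_mul hf hg]; ring

lemma pd_smul (c : ℝ) (hf : DifferentiableAt ℝ f x) :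
    pd (fun y => c * f y) k x = c * pd f k x := by
  simp [pd, fderiv_const_mul hf]

lemma pd_sum {m : Type*} [Fintype m] (F : m → Vec n → ℝ)
    (hF : ∀ i, DifferentiableAt ℝ (F i) x) :
    pd (fun y => ∑ i, F i y) k x = ∑ i, pd (F i) k x := by
  simp [pd, fderiv_fun_sum (fun i _ => hF i)]

lemma pd_sq (hf : DifferentiableAt ℝ f x) :
    pd (fun y => (f y)^2 : Vec n → ℝ) k x = 2 * f x * pd f k x := by
  have : pd (fun y => f y * f y) k x = _ := pd_mul hf hf
  simpa [pow_two] using this.trans (by ring)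

lemma pd_inv (hg : DifferentiableAt ℝ g x) (hgx : g x ≠ 0) :
    pd (fun y => (g y)⁻¹) k x = -pd g k x / (g x)^2 := by
  have h := (hasDerivAt_inv hgx).comp_hasFDerivAt x hg.hasFDerivAt
  have h2 : HasFDerivAt (fun y => (g y)⁻¹) (-(g x ^ 2)⁻¹ • fderiv ℝ g x) x := h
  rw [pd, h2.fderiv]; simp [pd]; ring

lemma pd_div (hf : DifferentiableAt ℝ f x) (hg : DifferentiableAt ℝ g x) (hgx : g x ≠ 0) :
    pd (fun y => f y / g y) k x = (pd f k x * g x - f x * pd g k x) / (g x)^2 := by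
  have : pd (fun y => f y * (g y)⁻¹) k x = pd f k x * (g x)⁻¹ + f x * pd (fun y => (g y)⁻¹) k x :=
    pd_mul hf (hg.inv hgx)
  simp only [div_eq_mul_inv, this, pd_inv hg hgx]
  field_simp; ring

lemma pd_sqrt (hf : DifferentiableAt ℝ f x) (hfx : f x ≠ 0) :
    pd (fun y => Real.sqrt (f y)) k x = pd f k x / (2 * Real.sqrt (f x)) := by
  have h := (Real.hasDerivAt_sqrt hfx).comp_hasFDerivAt x hf.hasFDerivAt
  have h2 : HasFDerivAt (fun y => Real.sqrt (f y))
    ((1 / (2 * Real.sqrt (f x))) • fderiv ℝ f x) x := h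
  rw [pd, h2.fderiv]; simp [pd]; ring

/-! ### The conformal factor `u = 1 + μ|x|²` and the metric -/

def U {n : ℕ} (μ : ℝ) (x : Vec n) : ℝ := 1 + μ * ∑ l, (x l)^2

lemma diffAt_U : DifferentiableAt ℝ (U μ) x := by unfold U; fun_prop

lemma pd_U : pd (U μ) k x = 2 * μ * x k := by
  have h1 : ∀ l : Fin n, DifferentiableAt ℝ (fun x : Vec n => (x l)^2) x := fun l => by fun_prop
  have e1 : pd (U μ) k x = pd (fun x : Vec n => 1 + μ * ∑ l, (x l)^2) k x := rfl
  rw [e1, pd_add (by fun_prop) (by fun_prop), pd_const, pd_smul _ (by fun_prop),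
      pd_sum _ h1]
  have e2 : ∀ l : Fin n, pd (fun x : Vec n => (x l)^2) k x
      = 2 * x l * (if k = l then 1 else 0) := by
    intro l; rw [pd_sq (by fun_prop), pd_coord]
  simp only [e2]
  rw [Finset.sum_congr rfl (fun l _ => by split_ifs <;> ring :
      ∀ l ∈ Finset.univ, 2 * x l * (if k = l then 1 else 0) = if k = l then 2 * x l else 0),
    Finset.sum_ite_eq]
  simp; ring

lemma hMat_apply : hMat μ x a b =
    (U μ x * (if a = b then (1:ℝ) else 0) - μ * x a * x b) / (U μ x)^2 := rfl

lemma hMat_fun_eq : (fun x : Vec n => hMat μ x a b) =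
    fun x => (U μ x * (if a = b then (1:ℝ) else 0) - μ * x a * x b) / (U μ x)^2 := rfl

lemma diffAt_N : DifferentiableAt ℝ
    (fun y : Vec n => U μ y * (if a = b then (1:ℝ) else 0) - μ * y a * y b) x :=
  (diffAt_U.mul_const _).sub (by fun_prop)

lemma diffAt_D : DifferentiableAt ℝ (fun y : Vec n => (U μ y)^2) x := diffAt_U.pow 2

lemma diffAt_hMat (h0 : U μ x ≠ 0) : DifferentiableAt ℝ (fun x : Vec n => hMat μ x a b) x := by
  rw [hMat_fun_eq]
  simp only [div_eq_mul_inv]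
  exact diffAt_N.mul (diffAt_D.inv (pow_ne_zero _ h0))

lemma pd_hMat (h0 : U μ x ≠ 0) :
    pd (fun x : Vec n => hMat μ x a b) c x =
      (-2*μ*(x c)*(U μ x)*(if a = b then (1:ℝ) else 0)
        - μ*(U μ x)*((if c = a then (1:ℝ) else 0)*(x b) + (x a)*(if c = b then (1:ℝ) else 0))
        + 4*μ^2*(x a)*(x b)*(x c)) / (U μ x)^3 := by
  rw [hMat_fun_eq]
  rw [pd_div diffAt_N diffAt_D (pow_ne_zero _ h0)]
  rw [pd_sq diffAt_U, pd_U]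
  rw [pd_sub (diffAt_U.mul_const _) (by fun_prop)]
  rw [show (fun y : Vec n => U μ y * (if a = b then (1:ℝ) else 0)) =
        (fun y : Vec n => U μ y * (fun _ : Vec n => (if a = b then (1:ℝ) else 0)) y) from rfl,
      pd_mul diffAt_U (differentiableAt_const _), pd_const, pd_U]
  rw [show (fun y : Vec n => μ * y a * y b) =
        (fun y : Vec n => (fun z : Vec n => μ * z a) y * (fun z : Vec n => z b) y) from rfl,
      pd_mul (by fun_prop) (by fun_prop), pd_smul _ (by fun_prop), pd_coord, pd_coord]
  split_ifs <;> field_simp <;> ring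

/-! ### The inverse metric and the Christoffel symbols -/

/-- Inverse metric `h^{ij} = u(δ_{ij} + μ x_i x_j)`. -/
def Minv {n : ℕ} (μ : ℝ) (x : Vec n) : Matrix (Fin n) (Fin n) ℝ :=
  Matrix.of fun i j => U μ x * ((if i = j then (1:ℝ) else 0) + μ * x i * x j)

lemma sum_ifk (F : Fin n → ℝ) : ∑ l, (if k = l then F l else 0) = F k := by
  simp [Finset.sum_ite_eq]

lemma sum_ifk' (F : Fin n → ℝ) : ∑ l, (if l = k then F l else 0) = F k := by
  simp [Finset.sum_ite_eq']

lemma hMat_mul_Minv (h0 : U μ x ≠ 0) : hMat μ x * Minv μ x = 1 := by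
  ext i j
  rw [Matrix.mul_apply, Matrix.one_apply]
  have key : ∀ l, hMat μ x i l * Minv μ x l j =
      (if i = l then ((if l = j then (1:ℝ) else 0) + μ * x l * x j) else 0)
      + (if l = j then -(μ/U μ x) * x i * x l else 0)
      - (μ^2/U μ x) * x i * x j * (x l)^2 := by
    intro l
    rw [hMat_apply]
    show (U μ x * (if i = l then (1:ℝ) else 0) - μ * x i * x l) / (U μ x)^2
        * (U μ x * ((if l = j then (1:ℝ) else 0) + μ * x l * x j)) = _
    split_ifs <;> subst_vars <;> field_simp <;> ring
  rw [Finset.sum_congr rfl (fun l _ => key l)]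
  rw [Finset.sum_sub_distrib, Finset.sum_add_distrib, sum_ifk, sum_ifk', ← Finset.mul_sum]
  have hU : U μ x = 1 + μ * ∑ l, (x l)^2 := rfl
  split_ifs with h
  · subst h; rw [hU] at h0 ⊢; field_simp; ring
  · rw [hU] at h0 ⊢; field_simp; ring

lemma Minv_mul_hMat (h0 : U μ x ≠ 0) : Minv μ x * hMat μ x = 1 :=
  mul_eq_one_comm.mp (hMat_mul_Minv h0)

lemma inv_hMat (h0 : U μ x ≠ 0) : (hMat μ x)⁻¹ = Minv μ x :=
  Matrix.inv_eq_right_inv (hMat_mul_Minv h0)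

set_option maxHeartbeats 2000000 in
lemma christoffel_eq (h0 : U μ x ≠ 0) :
    christoffel (hMat μ) k i j x =
      -μ * ((if k = i then (1:ℝ) else 0) * x j + (if k = j then (1:ℝ) else 0) * x i) / U μ x := by
  unfold christoffel
  rw [inv_hMat h0]
  have key : ∀ l, Minv μ x k l *
      (pd (fun x => hMat μ x l i) j x + pd (fun x => hMat μ x l j) i x
        - pd (fun x => hMat μ x i j) l x) =
      (if k = l then
        (-2*μ*((if l = i then (1:ℝ) else 0)*x j + (if l = j then (1:ℝ) else 0)*x i)/U μ x
          + 4*μ^2*x i*x j*x l/(U μ x)^2) else 0)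
      + (if l = i then -2*μ^2*x k*x l*x j/U μ x else 0)
      + (if l = j then -2*μ^2*x k*x l*x i/U μ x else 0)
      + (4*μ^3*x k*x i*x j/(U μ x)^2) * (x l)^2 := by
    intro l
    rw [pd_hMat h0, pd_hMat h0, pd_hMat h0]
    show U μ x * ((if k = l then (1:ℝ) else 0) + μ * x k * x l) * _ = _
    simp only [@eq_comm _ j l, @eq_comm _ i l, @eq_comm _ j i, @eq_comm _ l k]
    split_ifs <;> subst_vars <;> field_simp <;> ring
  rw [Finset.sum_congr rfl (fun l _ => key l)]
  rw [Finset.sum_add_distrib, Finset.sum_add_distrib, Finset.sum_add_distrib,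
    sum_ifk, sum_ifk', sum_ifk', ← Finset.mul_sum]
  have hU : U μ x = 1 + μ * ∑ l, (x l)^2 := rfl
  rw [hU] at h0 ⊢
  split_ifs <;> field_simp <;> ring

/-! ### Symmetry of second derivatives and constancy -/

lemma pd_comm (hf : ContDiffAt ℝ 2 f x) (j k : Fin n) :
    pd (fun y => pd f j y) k x = pd (fun y => pd f k y) j x := by
  have hdf : DifferentiableAt ℝ (fderiv ℝ f) x :=
    (hf.fderiv_right (m := 1) (by norm_num)).differentiableAt (by norm_num)
  have hsymm := hf.isSymmSndFDerivAt (by simp)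
  have hfd : ∀ v : Vec n, fderiv ℝ (fun y => (fderiv ℝ f y) v) x
      = (fderiv ℝ (fderiv ℝ f) x).flip v := by
    intro v
    rw [fderiv_clm_apply hdf (differentiableAt_const v)]
    ext u; simp
  unfold pd
  rw [hfd, hfd]
  exact hsymm _ _

/-- Constancy of a function with vanishing fderiv on a connected open set. -/
lemma const_of_pd_zero {Ω : Set (Vec n)} (hΩ : IsOpen Ω) (hconn : IsPreconnected Ω)
    (hf : ∀ x ∈ Ω, DifferentiableAt ℝ f x) (hpd : ∀ x ∈ Ω, fderiv ℝ f x = 0)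
    {x y : Vec n} (hx : x ∈ Ω) (hy : y ∈ Ω) : f x = f y := by
  have locconst : ∀ z ∈ Ω, ∀ᶠ u in nhds z, f u = f z := by
    intro z hz
    obtain ⟨ε, hε, hball⟩ := Metric.isOpen_iff.1 hΩ z hz
    have hconv : Convex ℝ (Metric.ball z ε) := convex_ball z ε
    have hdiff : DifferentiableOn ℝ f (Metric.ball z ε) :=
      fun u hu => ((hf u (hball hu)).differentiableWithinAt)
    have : ∀ u ∈ Metric.ball z ε, f u = f z := by
      intro u hu
      refine hconv.is_const_of_fderivWithin_eq_zero hdiff (fun v hv => ?_) hu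
        (Metric.mem_ball_self hε)
      rw [fderivWithin_of_isOpen Metric.isOpen_ball hv]
      exact hpd v (hball hv)
    filter_upwards [Metric.ball_mem_nhds z hε] using this
  set S := {z ∈ Ω | f z = f x}
  have hSopen : IsOpen S := by
    rw [Metric.isOpen_iff]
    intro z hz
    obtain ⟨ε, hε, hball⟩ := Metric.isOpen_iff.1 hΩ z hz.1
    obtain ⟨t, ht, hto, hzt⟩ := eventually_nhds_iff.1 (locconst z hz.1)
    obtain ⟨δ, hδ, hbδ⟩ := Metric.isOpen_iff.1 hto z hzt
    refine ⟨min ε δ, lt_min hε hδ, fun u hu => ?_⟩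
    have hu' : u ∈ Metric.ball z ε := Metric.ball_subset_ball (min_le_left _ _) hu
    have hu2 : u ∈ Metric.ball z δ := Metric.ball_subset_ball (min_le_right _ _) hu
    exact ⟨hball hu', (ht u (hbδ hu2)).trans hz.2⟩
  have hTopen : IsOpen {z ∈ Ω | f z ≠ f x} := by
    rw [Metric.isOpen_iff]
    intro z hz
    obtain ⟨t, ht, hto, hzt⟩ := eventually_nhds_iff.1 (locconst z hz.1)
    obtain ⟨ε, hε, hball⟩ := Metric.isOpen_iff.1 (hto.inter hΩ) z ⟨hzt, hz.1⟩
    refine ⟨ε, hε, fun u hu => ⟨(hball hu).2, ?_⟩⟩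
    rw [ht u (hball hu).1]; exact hz.2
  have : Ω ⊆ S := by
    refine hconn.subset_left_of_subset_union hSopen hTopen ?_ ?_ ⟨x, hx, hx, rfl⟩
    · rw [Set.disjoint_left]; rintro u ⟨_, h1⟩ ⟨_, h2⟩; exact h2 h1
    · intro u hu
      by_cases h : f u = f x
      · exact Or.inl ⟨hu, h⟩
      · exact Or.inr ⟨hu, h⟩
  exact ((this hy).2).symm

lemma fderiv_zero_of_pd (h : ∀ k, pd f k x = 0) : fderiv ℝ f x = 0 := by
  apply ContinuousLinearMap.ext; intro v
  have hv : v = ∑ k, v k • (Pi.single k 1 : Vec n) := by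
    ext j; simp [Finset.sum_apply, Pi.single_apply, eq_comm]
  rw [hv, map_sum]
  simp only [map_smul]
  unfold pd at h
  simp [h]

lemma pd_congr_nhds {f g : Vec n → ℝ} (h : f =ᶠ[nhds x] g) : pd f k x = pd g k x := by
  unfold pd; rw [Filter.EventuallyEq.fderiv_eq h]


/-! ### The conformal equation in explicit form -/

lemma diffAt_coord : DifferentiableAt ℝ (fun y : Vec n => y i) x := by fun_prop

/-- The right-hand side of the closed-conformal equation: `∂_j w_i = E i j`. -/
def Efun {n : ℕ} (μ : ℝ) (w : Vec n → Vec n) (φ : Vec n → ℝ) (i j : Fin n) (y : Vec n) : ℝ :=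
  φ y * hMat μ y i j - μ * (y j * w y i + y i * w y j) / U μ y

/-- The explicit value of `∂_k (E i j)` at a point, with `pφ` standing for `∂_k φ`. -/
def pdEval {n : ℕ} (μ : ℝ) (w : Vec n → Vec n) (φ : Vec n → ℝ) (pφ : ℝ) (i j k : Fin n)
    (x : Vec n) : ℝ :=
  pφ * hMat μ x i j
  + φ x * ((-2*μ*x k*U μ x*(if i = j then (1:ℝ) else 0)
      - μ*U μ x*((if k = i then (1:ℝ) else 0)*x j + x i*(if k = j then (1:ℝ) else 0))
      + 4*μ^2*x i*x j*x k) / (U μ x)^3)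
  - (μ * (((if k = j then (1:ℝ) else 0) * w x i + x j * Efun μ w φ i k x)
        + ((if k = i then (1:ℝ) else 0) * w x j + x i * Efun μ w φ j k x)) * U μ x
     - μ * (x j * w x i + x i * w x j) * (2*μ*x k)) / (U μ x)^2

variable {w : Vec n → Vec n} {φ : Vec n → ℝ}

lemma diffAt_N2 (hwd : ∀ m, DifferentiableAt ℝ (fun y => w y m) x) :
    DifferentiableAt ℝ (fun y : Vec n => μ * (y j * w y i + y i * w y j)) x :=
  (((diffAt_coord.mul (hwd i)).add (diffAt_coord.mul (hwd j))).const_mul μ)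

lemma pdE_explicit (hU0 : U μ x ≠ 0)
    (hwd : ∀ m, DifferentiableAt ℝ (fun y => w y m) x)
    (hφd : DifferentiableAt ℝ φ x)
    (hEw : ∀ m c, pd (fun y => w y m) c x = Efun μ w φ m c x)
    (i j k : Fin n) :
    pd (Efun μ w φ i j) k x = pdEval μ w φ (pd φ k x) i j k x := by
  have d1 : DifferentiableAt ℝ (fun y => φ y * hMat μ y i j) x := hφd.mul (diffAt_hMat hU0)
  have d2 := diffAt_N2 (μ := μ) (i := i) (j := j) hwd
  have dq : DifferentiableAt ℝ (fun y : Vec n => μ * (y j * w y i + y i * w y j) / U μ y) x := by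
    show DifferentiableAt ℝ (fun y : Vec n => μ * (y j * w y i + y i * w y j) * (U μ y)⁻¹) x
    exact d2.mul (diffAt_U.inv hU0)
  show pd (fun y => φ y * hMat μ y i j - μ * (y j * w y i + y i * w y j) / U μ y) k x = _
  rw [pd_sub d1 dq, pd_mul hφd (diffAt_hMat hU0), pd_hMat hU0,
      pd_div d2 diffAt_U hU0, pd_U,
      pd_smul μ ((diffAt_coord.fun_mul (hwd i)).fun_add (diffAt_coord.fun_mul (hwd j))),
      pd_add (diffAt_coord.fun_mul (hwd i)) (diffAt_coord.fun_mul (hwd j)),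
      pd_mul diffAt_coord (hwd i), pd_mul diffAt_coord (hwd j),
      pd_coord, pd_coord, hEw i k, hEw j k]
  unfold pdEval
  ring

set_option maxHeartbeats 4000000 in
lemma key2_alg (hU0 : U μ x ≠ 0) (pφj pφk : ℝ) (i j k : Fin n) :
    pdEval μ w φ pφk i j k x - pdEval μ w φ pφj i k j x
      = (pφk + μ * w x k) * hMat μ x i j - (pφj + μ * w x j) * hMat μ x i k := by
  simp only [pdEval, Efun, hMat_apply]
  simp only [@eq_comm _ k i, @eq_comm _ k j, @eq_comm _ j i]
  split_ifs <;> subst_vars <;> field_simp <;> ring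


/-! ### The conserved quantities -/

def Sfun {n : ℕ} (w : Vec n → Vec n) (y : Vec n) : ℝ := ∑ l, w y l * y l

def Kfun {n : ℕ} (μ : ℝ) (w : Vec n → Vec n) (φ : Vec n → ℝ) (y : Vec n) : ℝ :=
  φ y / Real.sqrt (U μ y) + μ * (Real.sqrt (U μ y) * Sfun w y)

def Afun {n : ℕ} (μ : ℝ) (w : Vec n → Vec n) (φ : Vec n → ℝ) (i : Fin n) (y : Vec n) : ℝ :=
  Real.sqrt (U μ y) * w y i - φ y * y i / Real.sqrt (U μ y)

lemma diffAt_Sfun (hwd : ∀ m, DifferentiableAt ℝ (fun y => w y m) x) :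
    DifferentiableAt ℝ (Sfun w) x := by
  show DifferentiableAt ℝ (fun y => ∑ l, w y l * y l) x
  exact DifferentiableAt.fun_sum (fun l _ => (hwd l).fun_mul diffAt_coord)

lemma pd_Sfun (hUpos : 0 < U μ x)
    (hwd : ∀ m, DifferentiableAt ℝ (fun y => w y m) x)
    (hEw : ∀ m c, pd (fun y => w y m) c x = Efun μ w φ m c x) (k : Fin n) :
    pd (Sfun w) k x
      = φ x * x k / (U μ x)^2 - μ * x k * Sfun w x / U μ x + w x k / U μ x := by
  have hU0 := ne_of_gt hUpos
  show pd (fun y => ∑ l, w y l * y l) k x = _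
  rw [pd_sum _ (fun l => (hwd l).fun_mul diffAt_coord)]
  have e : ∀ l ∈ Finset.univ, pd (fun y => w y l * y l) k x
      = Efun μ w φ l k x * x l + w x l * (if k = l then (1:ℝ) else 0) := by
    intro l _
    rw [pd_mul (hwd l) diffAt_coord, hEw l k, pd_coord]
  rw [Finset.sum_congr rfl e, Finset.sum_add_distrib]
  have e2 : ∀ l ∈ Finset.univ, Efun μ w φ l k x * x l =
      (if l = k then φ x * U μ x * x l / (U μ x)^2 else 0)
        - (φ x * μ * x k / (U μ x)^2) * (x l)^2
        - (μ * x k / U μ x) * (w x l * x l)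
        - (μ * w x k / U μ x) * (x l)^2 := by
    intro l _
    show (φ x * ((U μ x * (if l = k then (1:ℝ) else 0) - μ * x l * x k) / (U μ x)^2)
        - μ * (x k * w x l + x l * w x k) / U μ x) * x l = _
    split_ifs <;> field_simp <;> ring
  have e3 : ∀ l ∈ Finset.univ, w x l * (if k = l then (1:ℝ) else 0)
      = (if k = l then w x l else 0) := by
    intro l _; split_ifs <;> ring
  rw [Finset.sum_congr rfl e2, Finset.sum_congr rfl e3, sum_ifk,
      Finset.sum_sub_distrib, Finset.sum_sub_distrib, Finset.sum_sub_distrib,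
      sum_ifk', ← Finset.mul_sum, ← Finset.mul_sum, ← Finset.mul_sum]
  rw [show ∑ l, w x l * x l = Sfun w x from rfl]
  have hU : U μ x = 1 + μ * ∑ l, (x l)^2 := rfl
  rw [hU] at hU0 ⊢
  field_simp
  ring

lemma pd_Kfun (hUpos : 0 < U μ x)
    (hwd : ∀ m, DifferentiableAt ℝ (fun y => w y m) x)
    (hφd : DifferentiableAt ℝ φ x)
    (hEw : ∀ m c, pd (fun y => w y m) c x = Efun μ w φ m c x)
    (hTx : ∀ c, pd φ c x = -μ * w x c) (k : Fin n) :
    pd (Kfun μ w φ) k x = 0 := by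
  have hU0 := ne_of_gt hUpos
  have hs0 : Real.sqrt (U μ x) ≠ 0 := ne_of_gt (Real.sqrt_pos.mpr hUpos)
  have dsq : DifferentiableAt ℝ (fun y => Real.sqrt (U μ y)) x := diffAt_U.sqrt hU0
  have dd1 : DifferentiableAt ℝ (fun y : Vec n => φ y / Real.sqrt (U μ y)) x := by
    show DifferentiableAt ℝ (fun y : Vec n => φ y * (Real.sqrt (U μ y))⁻¹) x
    exact hφd.mul (dsq.inv hs0)
  have dd2 : DifferentiableAt ℝ
      (fun y : Vec n => μ * (Real.sqrt (U μ y) * Sfun w y)) x :=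
    (dsq.mul (diffAt_Sfun hwd)).const_mul μ
  show pd (fun y => φ y / Real.sqrt (U μ y) + μ * (Real.sqrt (U μ y) * Sfun w y)) k x = 0
  rw [pd_add dd1 dd2, pd_div hφd dsq hs0, pd_sqrt diffAt_U hU0, pd_U,
      pd_smul μ (dsq.fun_mul (diffAt_Sfun hwd)), pd_mul dsq (diffAt_Sfun hwd),
      pd_sqrt diffAt_U hU0, pd_U, pd_Sfun hUpos hwd hEw k, hTx k]
  have hs2 : Real.sqrt (U μ x) ^ 2 = U μ x := Real.sq_sqrt hUpos.le
  obtain ⟨s, hs⟩ : ∃ s, Real.sqrt (U μ x) = s := ⟨_, rfl⟩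
  rw [hs] at hs2 hs0 ⊢
  rw [← hs2]
  field_simp
  ring

lemma pd_Afun (hUpos : 0 < U μ x)
    (hwd : ∀ m, DifferentiableAt ℝ (fun y => w y m) x)
    (hφd : DifferentiableAt ℝ φ x)
    (hEw : ∀ m c, pd (fun y => w y m) c x = Efun μ w φ m c x)
    (hTx : ∀ c, pd φ c x = -μ * w x c) (i k : Fin n) :
    pd (Afun μ w φ i) k x = 0 := by
  have hU0 := ne_of_gt hUpos
  have hs0 : Real.sqrt (U μ x) ≠ 0 := ne_of_gt (Real.sqrt_pos.mpr hUpos)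
  have dsq : DifferentiableAt ℝ (fun y => Real.sqrt (U μ y)) x := diffAt_U.sqrt hU0
  have dd1 : DifferentiableAt ℝ (fun y : Vec n => Real.sqrt (U μ y) * w y i) x :=
    dsq.mul (hwd i)
  have dd2 : DifferentiableAt ℝ (fun y : Vec n => φ y * y i / Real.sqrt (U μ y)) x := by
    show DifferentiableAt ℝ (fun y : Vec n => φ y * y i * (Real.sqrt (U μ y))⁻¹) x
    exact (hφd.mul diffAt_coord).mul (dsq.inv hs0)
  show pd (fun y => Real.sqrt (U μ y) * w y i - φ y * y i / Real.sqrt (U μ y)) k x = 0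
  rw [pd_sub dd1 dd2, pd_mul dsq (hwd i), pd_sqrt diffAt_U hU0, pd_U, hEw i k,
      pd_div (hφd.fun_mul diffAt_coord) dsq hs0, pd_mul hφd diffAt_coord, pd_coord,
      pd_sqrt diffAt_U hU0, pd_U, hTx k]
  show _ * _ + _ * (φ x * ((U μ x * (if i = k then (1:ℝ) else 0) - μ * x i * x k) / (U μ x)^2)
      - μ * (x k * w x i + x i * w x k) / U μ x) - _ = 0
  have hs2 : Real.sqrt (U μ x) ^ 2 = U μ x := Real.sq_sqrt hUpos.le
  obtain ⟨s, hs⟩ : ∃ s, Real.sqrt (U μ x) = s := ⟨_, rfl⟩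
  rw [hs] at hs2 hs0 ⊢
  rw [← hs2]
  simp only [@eq_comm _ k i]
  split_ifs <;> field_simp <;> ring

lemma diffAt_Kfun (hUpos : 0 < U μ x)
    (hwd : ∀ m, DifferentiableAt ℝ (fun y => w y m) x)
    (hφd : DifferentiableAt ℝ φ x) :
    DifferentiableAt ℝ (Kfun μ w φ) x := by
  have hU0 := ne_of_gt hUpos
  have hs0 : Real.sqrt (U μ x) ≠ 0 := ne_of_gt (Real.sqrt_pos.mpr hUpos)
  have dsq : DifferentiableAt ℝ (fun y => Real.sqrt (U μ y)) x := diffAt_U.sqrt hU0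
  show DifferentiableAt ℝ
    (fun y => φ y * (Real.sqrt (U μ y))⁻¹ + μ * (Real.sqrt (U μ y) * Sfun w y)) x
  exact (hφd.mul (dsq.inv hs0)).add ((dsq.mul (diffAt_Sfun hwd)).const_mul μ)

lemma diffAt_Afun (hUpos : 0 < U μ x)
    (hwd : ∀ m, DifferentiableAt ℝ (fun y => w y m) x)
    (hφd : DifferentiableAt ℝ φ x) (i : Fin n) :
    DifferentiableAt ℝ (Afun μ w φ i) x := by
  have hU0 := ne_of_gt hUpos
  have hs0 : Real.sqrt (U μ x) ≠ 0 := ne_of_gt (Real.sqrt_pos.mpr hUpos)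
  have dsq : DifferentiableAt ℝ (fun y => Real.sqrt (U μ y)) x := diffAt_U.sqrt hU0
  show DifferentiableAt ℝ
    (fun y => Real.sqrt (U μ y) * w y i - φ y * y i * (Real.sqrt (U μ y))⁻¹) x
  exact (dsq.mul (hwd i)).sub ((hφd.mul diffAt_coord).mul (dsq.inv hs0))

end Stmt8Aux

/-- A closed conformal 1-form on a domain of the space form `h_μ`, i.e. one satisfying
`∂w_i/∂xʲ − Γᵏ_{ij}w_k = φ(x)h_{ij}`, has the explicit form
`w_i(x) = [(k − μ⟨a,x⟩)x_i + (1+μ|x|²)a_i]/(1+μ|x|²)^{3/2}` for constants `k`, `a`. -/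
theorem stmt_8 {n : ℕ} (hn : 2 ≤ n) (μ : ℝ) (Ω : Set (Vec n))
    (hΩ : IsOpen Ω) (hconn : IsConnected Ω)
    (hΩsub : Ω ⊆ {x : Vec n | 0 < 1 + μ * ∑ l, (x l)^2})
    (w : Vec n → Vec n) (hw : ∀ i, ContDiffOn ℝ (⊤ : ℕ∞) (fun x => w x i) Ω)
    (φ : Vec n → ℝ) (hφ : ContDiffOn ℝ (⊤ : ℕ∞) φ Ω)
    (hcc : ∀ x ∈ Ω, ∀ i j : Fin n,
      pd (fun x => w x i) j x - ∑ l, christoffel (hMat μ) l i j x * w x l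
        = φ x * hMat μ x i j) :
    ∃ (k : ℝ) (a : Vec n), ∀ x ∈ Ω, ∀ i : Fin n,
      w x i = ((k - μ * ∑ l, a l * x l) * x i + (1 + μ * ∑ l, (x l)^2) * a i)
        / ((1 + μ * ∑ l, (x l)^2) * Real.sqrt (1 + μ * ∑ l, (x l)^2)) := by
  classical
  open Stmt8Aux in
  have hUpos : ∀ x ∈ Ω, 0 < U μ x := fun x hx => hΩsub hx
  have hU0 : ∀ x ∈ Ω, U μ x ≠ 0 := fun x hx => ne_of_gt (hUpos x hx)
  have hwd : ∀ m, ∀ x ∈ Ω, DifferentiableAt ℝ (fun y => w y m) x := fun m x hx =>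
    ((hw m).contDiffAt (hΩ.mem_nhds hx)).differentiableAt (by simp)
  have hφd : ∀ x ∈ Ω, DifferentiableAt ℝ φ x := fun x hx =>
    (hφ.contDiffAt (hΩ.mem_nhds hx)).differentiableAt (by simp)
  have hw2 : ∀ m, ∀ x ∈ Ω, ContDiffAt ℝ 2 (fun y => w y m) x := fun m x hx =>
    ((hw m).contDiffAt (hΩ.mem_nhds hx)).of_le (WithTop.coe_le_coe.mpr le_top)
  -- Step 1: the equation in explicit form
  have hE : ∀ x ∈ Ω, ∀ i j, pd (fun y => w y i) j x = Efun μ w φ i j x := by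
    intro x hx i j
    have h := hcc x hx i j
    have hsum : ∑ l, christoffel (hMat μ) l i j x * w x l
        = -(μ * (x j * w x i + x i * w x j) / U μ x) := by
      have e : ∀ l ∈ Finset.univ, christoffel (hMat μ) l i j x * w x l =
          (if l = i then -μ*(x j)*w x l/U μ x else 0)
            + (if l = j then -μ*(x i)*w x l/U μ x else 0) := by
        intro l _
        rw [christoffel_eq (hU0 x hx)]
        split_ifs <;> field_simp <;> ring
      rw [Finset.sum_congr rfl e, Finset.sum_add_distrib, sum_ifk', sum_ifk']
      field_simp
      ring
    show pd (fun y => w y i) j x = φ x * hMat μ x i j - μ * (x j * w x i + x i * w x j) / U μ x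
    linear_combination h + hsum
  -- Step 2: equality of mixed second derivatives
  have big : ∀ x ∈ Ω, ∀ i j k, pd (Efun μ w φ i j) k x = pd (Efun μ w φ i k) j x := by
    intro x hx i j k
    have h1 : pd (fun y => pd (fun z => w z i) j y) k x = pd (Efun μ w φ i j) k x := by
      apply pd_congr_nhds
      filter_upwards [hΩ.mem_nhds hx] with y hy using hE y hy i j
    have h2 : pd (fun y => pd (fun z => w z i) k y) j x = pd (Efun μ w φ i k) j x := by
      apply pd_congr_nhds
      filter_upwards [hΩ.mem_nhds hx] with y hy using hE y hy i k
    exact h1.symm.trans ((pd_comm (hw2 i x hx) j k).trans h2)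
  -- Step 3: the key pointwise identity
  have claim : ∀ x ∈ Ω, ∀ i j k, (pd φ k x + μ * w x k) * hMat μ x i j
      = (pd φ j x + μ * w x j) * hMat μ x i k := by
    intro x hx i j k
    have b := big x hx i j k
    rw [pdE_explicit (hU0 x hx) (fun m => hwd m x hx) (hφd x hx) (hE x hx) i j k,
        pdE_explicit (hU0 x hx) (fun m => hwd m x hx) (hφd x hx) (hE x hx) i k j] at b
    have k2 := key2_alg (w := w) (φ := φ) (hU0 x hx) (pd φ j x) (pd φ k x) i j k
    linear_combination b - k2
  -- Step 4: ∂φ = -μ w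
  have hT : ∀ x ∈ Ω, ∀ c, pd φ c x = -μ * w x c := by
    intro x hx c
    have hnt : Nontrivial (Fin n) := ⟨⟨⟨0, by omega⟩, ⟨1, by omega⟩, by simp [Fin.ext_iff]⟩⟩
    obtain ⟨m, hm⟩ := exists_ne c
    have h0 := hU0 x hx
    have hmm : ∑ i, Minv μ x m i * hMat μ x i m = 1 := by
      have e : (Minv μ x * hMat μ x) m m = (1 : Matrix (Fin n) (Fin n) ℝ) m m := by
        rw [Minv_mul_hMat h0]
      simpa [Matrix.mul_apply, Matrix.one_apply] using e
    have hmk : ∑ i, Minv μ x m i * hMat μ x i c = 0 := by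
      have e : (Minv μ x * hMat μ x) m c = (1 : Matrix (Fin n) (Fin n) ℝ) m c := by
        rw [Minv_mul_hMat h0]
      simpa [Matrix.mul_apply, Matrix.one_apply, hm] using e
    have e1 : pd φ c x + μ * w x c
        = ∑ i, Minv μ x m i * ((pd φ c x + μ * w x c) * hMat μ x i m) := by
      rw [Finset.sum_congr rfl (fun i _ => by ring :
            ∀ i ∈ Finset.univ, Minv μ x m i * ((pd φ c x + μ * w x c) * hMat μ x i m)
              = (pd φ c x + μ * w x c) * (Minv μ x m i * hMat μ x i m)),
          ← Finset.mul_sum, hmm, mul_one]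
    have e2 : ∑ i, Minv μ x m i * ((pd φ c x + μ * w x c) * hMat μ x i m)
        = ∑ i, Minv μ x m i * ((pd φ m x + μ * w x m) * hMat μ x i c) :=
      Finset.sum_congr rfl (fun i _ => by rw [claim x hx i m c])
    have e3 : ∑ i, Minv μ x m i * ((pd φ m x + μ * w x m) * hMat μ x i c) = 0 := by
      rw [Finset.sum_congr rfl (fun i _ => by ring :
            ∀ i ∈ Finset.univ, Minv μ x m i * ((pd φ m x + μ * w x m) * hMat μ x i c)
              = (pd φ m x + μ * w x m) * (Minv μ x m i * hMat μ x i c)),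
          ← Finset.mul_sum, hmk, mul_zero]
    have : pd φ c x + μ * w x c = 0 := by rw [e1, e2, e3]
    linarith
  -- Step 5: the conserved quantities are constant
  have hKpd : ∀ z ∈ Ω, fderiv ℝ (Kfun μ w φ) z = 0 := fun z hz =>
    fderiv_zero_of_pd (fun k => pd_Kfun (hUpos z hz) (fun m => hwd m z hz) (hφd z hz)
      (hE z hz) (hT z hz) k)
  have hApd : ∀ i, ∀ z ∈ Ω, fderiv ℝ (Afun μ w φ i) z = 0 := fun i z hz =>
    fderiv_zero_of_pd (fun k => pd_Afun (hUpos z hz) (fun m => hwd m z hz) (hφd z hz)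
      (hE z hz) (hT z hz) i k)
  obtain ⟨x₀, hx₀⟩ := hconn.nonempty
  refine ⟨Kfun μ w φ x₀, fun l => Afun μ w φ l x₀, fun x hx i => ?_⟩
  have hKc : Kfun μ w φ x = Kfun μ w φ x₀ :=
    const_of_pd_zero hΩ hconn.isPreconnected
      (fun z hz => diffAt_Kfun (hUpos z hz) (fun m => hwd m z hz) (hφd z hz)) hKpd hx hx₀
  have hAc : ∀ l, Afun μ w φ l x = Afun μ w φ l x₀ := fun l =>
    const_of_pd_zero hΩ hconn.isPreconnected
      (fun z hz => diffAt_Afun (hUpos z hz) (fun m => hwd m z hz) (hφd z hz) l)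
      (hApd l) hx hx₀
  -- Step 6: reconstruction
  have hQpos := hUpos x hx
  have hs0 : Real.sqrt (U μ x) ≠ 0 := ne_of_gt (Real.sqrt_pos.mpr hQpos)
  show w x i = ((Kfun μ w φ x₀ - μ * ∑ l, Afun μ w φ l x₀ * x l) * x i
      + U μ x * Afun μ w φ i x₀) / (U μ x * Real.sqrt (U μ x))
  have h2 : Kfun μ w φ x₀ = φ x / Real.sqrt (U μ x) + μ * (Real.sqrt (U μ x) * Sfun w x) := by
    rw [← hKc]; rfl
  have h3 : Afun μ w φ i x₀ = Real.sqrt (U μ x) * w x i - φ x * x i / Real.sqrt (U μ x) := by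
    rw [← hAc i]; rfl
  have h1 : μ * ∑ l, Afun μ w φ l x₀ * x l
      = μ * (Real.sqrt (U μ x) * Sfun w x)
        - φ x / Real.sqrt (U μ x) * (Real.sqrt (U μ x)^2 - 1) := by
    have ea : ∀ l ∈ Finset.univ, Afun μ w φ l x₀ * x l = Afun μ w φ l x * x l := by
      intro l _; rw [hAc l]
    rw [Finset.sum_congr rfl ea]
    have e : ∀ l ∈ Finset.univ, Afun μ w φ l x * x l
        = Real.sqrt (U μ x) * (w x l * x l) - (φ x / Real.sqrt (U μ x)) * (x l)^2 := by
      intro l _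
      show (Real.sqrt (U μ x) * w x l - φ x * x l / Real.sqrt (U μ x)) * x l = _
      field_simp
    rw [Finset.sum_congr rfl e, Finset.sum_sub_distrib, ← Finset.mul_sum, ← Finset.mul_sum]
    rw [show ∑ l, w x l * x l = Sfun w x from rfl]
    rw [Real.sq_sqrt hQpos.le]
    rw [show U μ x = 1 + μ * ∑ l, (x l)^2 from rfl]
    ring
  rw [h1, h2, h3]
  have hs2 : Real.sqrt (U μ x) ^ 2 = U μ x := Real.sq_sqrt hQpos.le
  generalize hgen : Real.sqrt (U μ x) = s at hs2 hs0 ⊢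
  rw [← hs2]
  field_simp
  ring
end
end

section
/- Let μ > 0 and δ ≥ 0 be real numbers, set ρ² := δ²/μ + μ/4, and let c, t ∈ ℝ satisfy μc² ≤ δ² and t² ≤ (δ²/μ − c²)/(ρ² − c²). Then 1 + t > 0 and the quantity K := (ρ²μ³/16)·[(1+t)(ρ² − c²)]^{−3} satisfies (√(4δ²+μ²) − 2δ)³/(μ√(4δ²+μ²)) ≤ K ≤ (√(4δ²+μ²) + 2δ)³/(μ√(4δ²+μ²)). -/
/-!
Write `u = ρ² - c²` and `D = (1 + t) u`. The hypotheses say `μ/4 ≤ u ≤ ρ²` and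
`(D - u)² ≤ u (u - μ/4)`, so `D` lies between the roots of `x² - 2ux + uμ/4`.
This root interval only grows with `u`, so `D` lies between the roots for `u = ρ²`,
namely `s (s ∓ 2δ) / (4μ)` with `s = √(4δ² + μ²)`. As `K` is a decreasing function of `D`
and `(s - 2δ)(s + 2δ) = μ²`, these two values of `D` give exactly the two bounds.
-/

open Real

theorem sq_sub_le_mul_sub_of_le {a u R D : ℝ} (hu : 0 < u) (huR : u ≤ R)
    (hD : (D - u) ^ 2 ≤ u * (u - a)) : (D - R) ^ 2 ≤ R * (R - a) := by
  -- `(D - u)² - u (u - a) = D² + u (a - 2D)`, so `D ≥ a/2`; then the defect grows with `u`.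
  have hDa : a ≤ 2 * D := by
    by_contra! h
    nlinarith [mul_pos hu (sub_pos.2 h), sq_nonneg D]
  nlinarith [mul_nonneg (sub_nonneg.2 huR) (sub_nonneg.2 hDa)]

theorem sq_sub_le_of_sq_le_div {μ δ ρsq c t : ℝ} (hμ : 0 < μ) (hρ : ρsq = δ ^ 2 / μ + μ / 4)
    (hc : μ * c ^ 2 ≤ δ ^ 2) (ht : t ^ 2 ≤ (δ ^ 2 / μ - c ^ 2) / (ρsq - c ^ 2)) :
    ((1 + t) * (ρsq - c ^ 2) - ρsq) ^ 2 ≤ ρsq * (ρsq - μ / 4) := by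
  have hc' : c ^ 2 ≤ δ ^ 2 / μ := (le_div_iff₀ hμ).2 (by linarith)
  have hu : 0 < ρsq - c ^ 2 := by rw [hρ]; linarith
  have ht' : t ^ 2 * (ρsq - c ^ 2) ≤ ρsq - c ^ 2 - μ / 4 := by
    rw [le_div_iff₀ hu] at ht
    linarith
  refine sq_sub_le_mul_sub_of_le hu (by nlinarith) ?_
  calc ((1 + t) * (ρsq - c ^ 2) - (ρsq - c ^ 2)) ^ 2
      = (ρsq - c ^ 2) * (t ^ 2 * (ρsq - c ^ 2)) := by ring
    _ ≤ (ρsq - c ^ 2) * (ρsq - c ^ 2 - μ / 4) := mul_le_mul_of_nonneg_left ht' hu.le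

theorem mul_inv_pow_three_mem_Icc {μ δ s D : ℝ} (hμ : 0 < μ) (hδ : 0 ≤ δ) (hsδ : 2 * δ < s)
    (hs2 : s ^ 2 = 4 * δ ^ 2 + μ ^ 2) (hlo : s * (s - 2 * δ) / (4 * μ) ≤ D)
    (hhi : D ≤ s * (s + 2 * δ) / (4 * μ)) :
    s ^ 2 * μ ^ 2 / 64 * D⁻¹ ^ 3 ∈
      Set.Icc ((s - 2 * δ) ^ 3 / (μ * s)) ((s + 2 * δ) ^ 3 / (μ * s)) := by
  have hμ6 : (s - 2 * δ) ^ 3 * (s + 2 * δ) ^ 3 = μ ^ 6 := by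
    rw [← mul_pow, show μ ^ 6 = (μ ^ 2) ^ 3 by ring]
    congr 1
    linear_combination hs2
  have hs : 0 < s := by linarith
  have hsub : 0 < s - 2 * δ := by linarith
  have hadd : 0 < s + 2 * δ := by linarith
  have hD : 0 < D := lt_of_lt_of_le (by positivity) hlo
  refine ⟨?_, ?_⟩
  · calc (s - 2 * δ) ^ 3 / (μ * s)
        = s ^ 2 * μ ^ 2 / 64 * (s * (s + 2 * δ) / (4 * μ))⁻¹ ^ 3 := by
          field_simp
          linear_combination 64 * hμ6
      _ ≤ s ^ 2 * μ ^ 2 / 64 * D⁻¹ ^ 3 := by gcongr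
  · calc s ^ 2 * μ ^ 2 / 64 * D⁻¹ ^ 3
        ≤ s ^ 2 * μ ^ 2 / 64 * (s * (s - 2 * δ) / (4 * μ))⁻¹ ^ 3 := by gcongr
      _ = (s + 2 * δ) ^ 3 / (μ * s) := by
          field_simp
          linear_combination -64 * hμ6

/-- The analytic content of the curvature bounds (1.8): for `μ > 0`, `δ ≥ 0`,
`ρ² = δ²/μ + μ/4`, and reals `c`, `t` with `μc² ≤ δ²` and
`t² ≤ (δ²/μ − c²)/(ρ² − c²)`, one has `1 + t > 0`, and
`K := (ρ²μ³/16)·[(1+t)(ρ²−c²)]⁻³` satisfies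
`(√(4δ²+μ²) − 2δ)³/(μ√(4δ²+μ²)) ≤ K ≤ (√(4δ²+μ²) + 2δ)³/(μ√(4δ²+μ²))`. -/
theorem stmt_15 (μ δ : ℝ) (hμ : 0 < μ) (hδ : 0 ≤ δ)
    (ρsq : ℝ) (hρ : ρsq = δ^2 / μ + μ / 4)
    (c t : ℝ) (hc : μ * c^2 ≤ δ^2)
    (ht : t^2 ≤ (δ^2 / μ - c^2) / (ρsq - c^2)) :
    0 < 1 + t ∧
    (Real.sqrt (4 * δ^2 + μ^2) - 2 * δ)^3 / (μ * Real.sqrt (4 * δ^2 + μ^2)) ≤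
      (ρsq * μ^3 / 16) * ((1 + t) * (ρsq - c^2))⁻¹^3 ∧
    (ρsq * μ^3 / 16) * ((1 + t) * (ρsq - c^2))⁻¹^3 ≤
      (Real.sqrt (4 * δ^2 + μ^2) + 2 * δ)^3 / (μ * Real.sqrt (4 * δ^2 + μ^2)) := by
  set s := √(4 * δ ^ 2 + μ ^ 2)
  have hs2 : s ^ 2 = 4 * δ ^ 2 + μ ^ 2 := Real.sq_sqrt (by positivity)
  have hsδ : 2 * δ < s := by nlinarith [Real.sqrt_nonneg (4 * δ ^ 2 + μ ^ 2)]
  have hρs : ρsq = s ^ 2 / (4 * μ) := by rw [hρ, hs2]; field_simp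
  have hroots : ρsq * (ρsq - μ / 4) = (δ * s / (2 * μ)) ^ 2 := by
    rw [hρ, div_pow, mul_pow, hs2]; field_simp; ring
  obtain ⟨hlo, hhi⟩ := abs_le_of_sq_le_sq'
    (hroots ▸ sq_sub_le_of_sq_le_div hμ hρ hc ht) (by positivity)
  have hlo' : s * (s - 2 * δ) / (4 * μ) ≤ (1 + t) * (ρsq - c ^ 2) := by
    rw [hρs] at hlo ⊢; field_simp at hlo ⊢; linarith
  have hhi' : (1 + t) * (ρsq - c ^ 2) ≤ s * (s + 2 * δ) / (4 * μ) := by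
    rw [hρs] at hhi ⊢; field_simp at hhi ⊢; linarith
  have hu : 0 < ρsq - c ^ 2 := by
    rw [hρ]; linarith [(le_div_iff₀ hμ).2 (by linarith : c ^ 2 * μ ≤ δ ^ 2)]
  have hD : 0 < (1 + t) * (ρsq - c ^ 2) :=
    lt_of_lt_of_le (div_pos (mul_pos (by linarith) (by linarith)) (by positivity)) hlo'
  have hK : ρsq * μ ^ 3 / 16 = s ^ 2 * μ ^ 2 / 64 := by rw [hρs]; field_simp; ring
  rw [hK]
  exact ⟨pos_of_mul_pos_left hD hu.le, mul_inv_pow_three_mem_Icc hμ hδ hsδ hs2 hlo' hhi'⟩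
end
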